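/- Let 0 < α < 1, let X' be a finite linearly independent set of unit vectors in R^d that is equiangular with angle α, let W be the linear span of X', and fix b₀ ∈ X'. Let V be the set of unit vectors v ∈ W such that ⟨v, b⟩ ∈ {α, −α} for every b ∈ X' and ⟨v, b₀⟩ = α, and let G be the simple graph on vertex set V in which distinct v, v' ∈ V are adjacent if and only if |⟨v, v'⟩| = α. Then for every finite equiangular set Y of unit vectors in W with angle α such that each line spanned by a vector of X' is among the lines spanned by vectors of Y, the number of distinct lines spanned by vectors of Y is at most |X'| + ω(G), where ω(G) is the clique number of G. -/

import Mathlib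

/-- The simple graph on a set `V` of vectors in which two distinct vectors are
adjacent exactly when the absolute value of their inner product is `α`. -/
def equiangularGraph {d : ℕ} (α : ℝ) (V : Set (EuclideanSpace ℝ (Fin d))) :
    SimpleGraph V where
  Adj v w := v ≠ w ∧
    |(inner ℝ (v : EuclideanSpace ℝ (Fin d)) (w : EuclideanSpace ℝ (Fin d)) : ℝ)| = α
  symm := ⟨fun v w ⟨hne, h⟩ => ⟨hne.symm, by rwa [real_inner_comm]⟩⟩
  loopless := ⟨fun v h => h.1 rfl⟩

/-!
A vector `y ∈ Y` whose line is not spanned by a vector of `X'` still has `|⟪y, b⟫| = α` for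
every `b ∈ X'`, because the line of `b` is spanned by some other member `±b` of `Y`. Replacing
`y` by `±y` so that `⟪y, b₀⟫ = α` puts it in `V`, and these representatives, one per line,
pairwise satisfy `|⟪u, w⟫| = α`, so they form a clique of `G`. The graph is finite because a
vector of `W = span X'` is determined by its inner products with `X'`.
-/

open Set Submodule RealInnerProductSpace

lemma eq_or_eq_neg_of_span_singleton_eq {F : Type*} [NormedAddCommGroup F] [NormedSpace ℝ F]
    {y b : F} (hy : ‖y‖ = 1) (hb : ‖b‖ = 1) (h : ℝ ∙ y = ℝ ∙ b) : y = b ∨ y = -b := by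
  obtain ⟨c, rfl⟩ := span_singleton_eq_span_singleton.mp h.symm
  have hc : |(c : ℝ)| = 1 := by simpa [Units.smul_def, norm_smul, hb] using hy
  rcases abs_eq zero_le_one |>.mp hc with hc | hc <;> simp [Units.smul_def, hc]

section InnerProductSpace

variable {E : Type*} [NormedAddCommGroup E] [InnerProductSpace ℝ E]

lemma eq_of_mem_span_of_forall_inner_eq {S : Set E} {v w : E} (hv : v ∈ span ℝ S)
    (hw : w ∈ span ℝ S) (h : ∀ b ∈ S, ⟪v, b⟫ = ⟪w, b⟫) : v = w := by
  have hS : span ℝ S ≤ LinearMap.ker (innerₛₗ ℝ (v - w)) :=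
    span_le.mpr fun b hb => by simp [h b hb]
  have hvw : ⟪v - w, v - w⟫ = 0 := hS (sub_mem hv hw)
  exact sub_eq_zero.mp (inner_self_eq_zero.mp hvw)

lemma finite_setOf_mem_span_forall_inner_mem {S : Set E} (hS : S.Finite) {A : Set ℝ}
    (hA : A.Finite) : {v | v ∈ span ℝ S ∧ ∀ b ∈ S, ⟪v, b⟫ ∈ A}.Finite := by
  have : Finite S := hS
  refine Finite.of_finite_image (f := fun v (b : S) => ⟪v, b⟫)
    ((Finite.pi fun _ => hA).subset ?_) ?_
  · rintro _ ⟨v, ⟨-, hvA⟩, rfl⟩ b -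
    exact hvA b b.2
  · rintro v ⟨hv, -⟩ w ⟨hw, -⟩ hvw
    exact eq_of_mem_span_of_forall_inner_eq hv hw fun b hb => congrFun hvw ⟨b, hb⟩

lemma abs_inner_eq_of_eq_or_eq_neg {x y x' y' : E} (hx : x' = x ∨ x' = -x)
    (hy : y' = y ∨ y' = -y) : |⟪x', y'⟫| = |⟪x, y⟫| := by
  rcases hx with rfl | rfl <;> rcases hy with rfl | rfl <;> simp

lemma abs_inner_eq_of_span_singleton_eq {y y' b : E} (hy' : ‖y'‖ = 1) (hb : ‖b‖ = 1)
    (hspan : ℝ ∙ y' = ℝ ∙ b) : |⟪y, b⟫| = |⟪y, y'⟫| :=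
  (abs_inner_eq_of_eq_or_eq_neg (.inl rfl) (eq_or_eq_neg_of_span_singleton_eq hy' hb hspan)).symm

noncomputable def alignSign (b y : E) : E := if ⟪y, b⟫ < 0 then -y else y

lemma alignSign_eq_or_eq_neg (b y : E) : alignSign b y = y ∨ alignSign b y = -y := by
  unfold alignSign; split_ifs <;> simp

lemma inner_alignSign_left (b y : E) : ⟪alignSign b y, b⟫ = |⟪y, b⟫| := by
  unfold alignSign
  split_ifs with h
  · rw [inner_neg_left, abs_of_neg h]
  · rw [abs_of_nonneg (not_lt.mp h)]

lemma span_singleton_alignSign (b y : E) : ℝ ∙ alignSign b y = ℝ ∙ y := by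
  rcases alignSign_eq_or_eq_neg b y with h | h <;> rw [h]
  rw [← neg_singleton, span_neg]

lemma alignSign_mem_of_forall_abs_inner_eq {α : ℝ} (hα : 0 ≤ α) {K : Submodule ℝ E}
    {X : Set E} {b₀ y : E} (hb₀ : b₀ ∈ X) (hyK : y ∈ K) (hy : ‖y‖ = 1)
    (hyX : ∀ b ∈ X, |⟪y, b⟫| = α) :
    alignSign b₀ y ∈ {v | v ∈ K ∧ ‖v‖ = 1 ∧ (∀ b ∈ X, ⟪v, b⟫ = α ∨ ⟪v, b⟫ = -α) ∧
      ⟪v, b₀⟫ = α} := by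
  have hsign := alignSign_eq_or_eq_neg b₀ y
  refine ⟨?_, ?_, fun b hb => ?_, ?_⟩
  · rcases hsign with h | h <;> rw [h]
    exacts [hyK, K.neg_mem hyK]
  · rcases hsign with h | h <;> simp [h, hy]
  · rw [← abs_eq hα, ← hyX b hb]
    exact abs_inner_eq_of_eq_or_eq_neg hsign (.inl rfl)
  · rw [inner_alignSign_left, hyX b₀ hb₀]

lemma Set.Pairwise.image_alignSign {α : ℝ} {T : Set E} (hT : T.Pairwise fun u w => |⟪u, w⟫| = α)
    (b : E) : (alignSign b '' T).Pairwise fun u w => |⟪u, w⟫| = α := by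
  rintro _ ⟨y, hy, rfl⟩ _ ⟨y', hy', rfl⟩ hne
  rw [← hT hy hy' fun h => hne (h ▸ rfl)]
  exact abs_inner_eq_of_eq_or_eq_neg (alignSign_eq_or_eq_neg b y) (alignSign_eq_or_eq_neg b y')

end InnerProductSpace

lemma ncard_le_cliqueNum_equiangularGraph {d : ℕ} {α : ℝ} {V T : Set (EuclideanSpace ℝ (Fin d))}
    (hV : V.Finite) (hTV : T ⊆ V) (hT : T.Pairwise fun u w => |⟪u, w⟫| = α) :
    T.ncard ≤ (equiangularGraph α V).cliqueNum := by
  have : Finite V := hV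
  set s : Set V := Subtype.val ⁻¹' T
  have hclique : (equiangularGraph α V).IsClique (s.toFinite.toFinset : Set V) := by
    intro u hu w hw huw
    simp only [Finite.coe_toFinset] at hu hw
    exact ⟨huw, hT hu hw (Subtype.val_injective.ne huw)⟩
  calc T.ncard = s.ncard :=
        (ncard_preimage_of_injective_subset_range Subtype.val_injective (by simpa using hTV)).symm
    _ = s.toFinite.toFinset.card := ncard_eq_toFinset_card s
    _ ≤ _ := hclique.card_le_cliqueNum

theorem equiangular_lines_card_le_card_add_cliqueNum_general {d : ℕ} (α : ℝ)
    (hα0 : 0 < α)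
    (X' : Finset (EuclideanSpace ℝ (Fin d)))
    (hunit : ∀ v ∈ X', ‖v‖ = 1)
    (b₀ : EuclideanSpace ℝ (Fin d)) (hb₀ : b₀ ∈ X')
    (W : Submodule ℝ (EuclideanSpace ℝ (Fin d)))
    (hW : W = Submodule.span ℝ (X' : Set (EuclideanSpace ℝ (Fin d))))
    (V : Set (EuclideanSpace ℝ (Fin d)))
    (hV : V = {v | v ∈ W ∧ ‖v‖ = 1 ∧
      (∀ b ∈ X', (inner ℝ v b : ℝ) = α ∨ (inner ℝ v b : ℝ) = -α) ∧
      (inner ℝ v b₀ : ℝ) = α})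
    (Y : Finset (EuclideanSpace ℝ (Fin d)))
    (hYW : ∀ y ∈ Y, y ∈ W)
    (hYunit : ∀ y ∈ Y, ‖y‖ = 1)
    (hYequi : ∀ y ∈ Y, ∀ y' ∈ Y, y ≠ y' → |(inner ℝ y y' : ℝ)| = α)
    (hX'Y : ∀ b ∈ X', ∃ y ∈ Y,
      Submodule.span ℝ ({y} : Set (EuclideanSpace ℝ (Fin d))) =
        Submodule.span ℝ ({b} : Set (EuclideanSpace ℝ (Fin d)))) :
    ((fun y => Submodule.span ℝ ({y} : Set (EuclideanSpace ℝ (Fin d)))) ''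
        (Y : Set (EuclideanSpace ℝ (Fin d)))).ncard ≤
      X'.card + (equiangularGraph α V).cliqueNum := by
  subst hW
  set line := fun y : EuclideanSpace ℝ (Fin d) => ℝ ∙ y
  set T := alignSign b₀ '' ((Y : Set _) \ line ⁻¹' (line '' X'))
  have hVfin : V.Finite := hV ▸ (finite_setOf_mem_span_forall_inner_mem X'.finite_toSet
    (toFinite {α, -α})).subset fun v hv => ⟨hv.1, hv.2.2.1⟩
  have hTV : T ⊆ V := by
    rintro _ ⟨y, ⟨hy, hyX'⟩, rfl⟩
    refine hV ▸ alignSign_mem_of_forall_abs_inner_eq hα0.le hb₀ (hYW y hy) (hYunit y hy) ?_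
    intro b hb
    obtain ⟨yb, hyb, hspan⟩ := hX'Y b hb
    have hne : y ≠ yb := by rintro rfl; exact hyX' ⟨b, hb, hspan.symm⟩
    rw [abs_inner_eq_of_span_singleton_eq (hYunit yb hyb) (hunit b hb) hspan]
    exact hYequi y hy yb hyb hne
  have hT : T.Pairwise fun u w => |⟪u, w⟫| = α :=
    Pairwise.image_alignSign (fun y hy y' hy' => hYequi y hy.1 y' hy'.1) b₀
  have hlineT : line '' T = line '' Y \ line '' X' := by
    simp only [T, image_image, line, span_singleton_alignSign, image_sdiff_preimage]
  calc (line '' Y).ncard ≤ (line '' Y \ line '' X').ncard + (line '' X').ncard :=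
        ncard_le_ncard_sdiff_add_ncard _ _ (toFinite _)
    _ ≤ T.ncard + X'.card := by
        rw [← hlineT, ← ncard_coe_finset X']
        exact add_le_add (ncard_image_le (toFinite _)) (ncard_image_le (toFinite _))
    _ ≤ (equiangularGraph α V).cliqueNum + X'.card := by
        gcongr; exact ncard_le_cliqueNum_equiangularGraph hVfin hTV hT
    _ = X'.card + (equiangularGraph α V).cliqueNum := add_comm _ _

/-- Let `X'` be a finite linearly independent equiangular set of unit vectors in
`ℝ^d` with angle `arccos α` (`0 < α < 1`), let `W` be its span and `b₀ ∈ X'`.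
Let `V` be the set of unit vectors `v ∈ W` with `⟪v, b⟫ = ±α` for all `b ∈ X'`
and `⟪v, b₀⟫ = α`, and let `G` be the graph on `V` joining vectors whose inner
product has absolute value `α`.  Then any finite equiangular set `Y` of unit
vectors in `W` with angle `arccos α`, whose set of spanned lines contains every
line spanned by a vector of `X'`, spans at most `|X'| + ω(G)` distinct lines. -/
theorem equiangular_lines_card_le_card_add_cliqueNum {d : ℕ} (α : ℝ)
    (hα0 : 0 < α) (hα1 : α < 1)
    (X' : Finset (EuclideanSpace ℝ (Fin d)))
    (hind : LinearIndependent ℝ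
      (fun x : (X' : Set (EuclideanSpace ℝ (Fin d))) => (x : EuclideanSpace ℝ (Fin d))))
    (hunit : ∀ v ∈ X', ‖v‖ = 1)
    (hequi : ∀ v ∈ X', ∀ w ∈ X', v ≠ w → |(inner ℝ v w : ℝ)| = α)
    (b₀ : EuclideanSpace ℝ (Fin d)) (hb₀ : b₀ ∈ X')
    (W : Submodule ℝ (EuclideanSpace ℝ (Fin d)))
    (hW : W = Submodule.span ℝ (X' : Set (EuclideanSpace ℝ (Fin d))))
    (V : Set (EuclideanSpace ℝ (Fin d)))
    (hV : V = {v | v ∈ W ∧ ‖v‖ = 1 ∧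
      (∀ b ∈ X', (inner ℝ v b : ℝ) = α ∨ (inner ℝ v b : ℝ) = -α) ∧
      (inner ℝ v b₀ : ℝ) = α})
    (Y : Finset (EuclideanSpace ℝ (Fin d)))
    (hYW : ∀ y ∈ Y, y ∈ W)
    (hYunit : ∀ y ∈ Y, ‖y‖ = 1)
    (hYequi : ∀ y ∈ Y, ∀ y' ∈ Y, y ≠ y' → |(inner ℝ y y' : ℝ)| = α)
    (hX'Y : ∀ b ∈ X', ∃ y ∈ Y,
      Submodule.span ℝ ({y} : Set (EuclideanSpace ℝ (Fin d))) =
        Submodule.span ℝ ({b} : Set (EuclideanSpace ℝ (Fin d)))) :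
    ((fun y => Submodule.span ℝ ({y} : Set (EuclideanSpace ℝ (Fin d)))) ''
        (Y : Set (EuclideanSpace ℝ (Fin d)))).ncard ≤
      X'.card + (equiangularGraph α V).cliqueNum :=
  equiangular_lines_card_le_card_add_cliqueNum_general α hα0 X' hunit b₀ hb₀ W hW V hV Y hYW hYunit
    hYequi hX'Y
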